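/- Let G be the complete k-uniform hypergraph on [n] with 1 ≤ k ≤ n-1, let (R_e)_{e} be mutually independent random variables indexed by the hyperedges, R_i = (R_e : i ∈ e), and let M be generated from (R_1,...,R_n) and X a random variable such that each user decodes X: X is a deterministic function of (R_i, M) for every i. Then H(X) ≤ (1/(n-k)) · Σ_{i=1}^n H(M | R_i). -/

import Mathlib

/-- Probability that the random variable `X` (on finite outcome space `Ω`
with probability mass function `p`) takes the value `a`. -/
noncomputable def pmass {Ω α : Type*} [Fintype Ω] [DecidableEq α]
    (p : Ω → ℝ) (X : Ω → α) (a : α) : ℝ :=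
  ∑ ω, if X ω = a then p ω else 0

/-- Shannon entropy (in bits) of a finitely valued random variable. -/
noncomputable def ent {Ω α : Type*} [Fintype Ω] [Fintype α] [DecidableEq α]
    (p : Ω → ℝ) (X : Ω → α) : ℝ :=
  ∑ a, -(pmass p X a * Real.logb 2 (pmass p X a))

/-- Conditional Shannon entropy `H(X | Y) = H(X, Y) - H(Y)`. -/
noncomputable def condEnt {Ω α β : Type*} [Fintype Ω] [Fintype α] [Fintype β]
    [DecidableEq α] [DecidableEq β] (p : Ω → ℝ) (X : Ω → α) (Y : Ω → β) : ℝ :=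
  ent p (fun ω => (X ω, Y ω)) - ent p Y

/-- `p` is a probability mass function on `Ω`. -/
def IsProb {Ω : Type*} [Fintype Ω] (p : Ω → ℝ) : Prop :=
  (∀ ω, 0 ≤ p ω) ∧ ∑ ω, p ω = 1

/-- Hyperedges of the complete `k`-uniform hypergraph on `Fin n`. -/
abbrev Edge (n k : ℕ) := {s : Finset (Fin n) // s.card = k}


/-!
Decodability gives, for each user `i`, `H(M | R_i) ≥ H(R_i, X) - H(R_i)`. The set function
`S ↦ H(R_S, X)` is submodular, so Shearer's lemma for the `n` stars `{e | i ∈ e}`, which cover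
every hyperedge exactly `k` times, gives `∑ᵢ H(R_i, X) ≥ k H(R, X) + (n - k) H(X)`. As `X` is a
function of `R` and the `R_e` are independent, `H(R, X) = ∑ₑ H(R_e)`, while
`∑ᵢ H(R_i) = k ∑ₑ H(R_e)`; summing the per-user bounds leaves `(n - k) H(X)`.
-/

open Finset

section Pmass

variable {Ω α β : Type*} [Fintype Ω] [DecidableEq α] [DecidableEq β] {p : Ω → ℝ}

lemma sum_pmass_mul [Fintype α] (Y : Ω → α) (g : α → ℝ) :
    ∑ a, pmass p Y a * g a = ∑ ω, p ω * g (Y ω) := by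
  simp only [pmass, sum_mul, ite_mul, zero_mul]
  rw [sum_comm]
  simp

lemma sum_pmass [Fintype α] (Y : Ω → α) : ∑ a, pmass p Y a = ∑ ω, p ω := by
  simpa using sum_pmass_mul (p := p) Y (fun _ => 1)

lemma sum_pmass_pair [Fintype α] (X : Ω → α) (Y : Ω → β) (b : β) :
    ∑ a, pmass p (fun ω => (X ω, Y ω)) (a, b) = pmass p Y b := by
  simp only [pmass, Prod.mk.injEq]
  rw [sum_comm]
  refine sum_congr rfl fun ω _ => ?_
  by_cases h : Y ω = b <;> simp [h]

lemma pmass_comp [Fintype α] (Y : Ω → α) (f : α → β) (b : β) :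
    pmass p (fun ω => f (Y ω)) b = ∑ a, if f a = b then pmass p Y a else 0 := by
  have h := sum_pmass_mul (p := p) Y fun a => if f a = b then 1 else 0
  simp only [mul_boole] at h
  exact h.symm

lemma pmass_nonneg (hp : ∀ ω, 0 ≤ p ω) (Y : Ω → α) (a : α) : 0 ≤ pmass p Y a :=
  sum_nonneg fun ω _ => by split <;> simp [hp ω]

lemma pmass_apply_pos (hp : ∀ ω, 0 ≤ p ω) (Y : Ω → α) {ω : Ω} (hω : p ω ≠ 0) :
    0 < pmass p Y (Y ω) :=
  ((hp ω).lt_of_ne' hω).trans_le <| by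
    simpa [pmass] using single_le_sum (f := fun ω' => if Y ω' = Y ω then p ω' else 0)
      (fun ω' _ => by split <;> simp [hp ω']) (mem_univ ω)

lemma pmass_pair_le (hp : ∀ ω, 0 ≤ p ω) (X : Ω → α) (Y : Ω → β) (a : α) (b : β) :
    pmass p (fun ω => (X ω, Y ω)) (a, b) ≤ pmass p Y b :=
  sum_le_sum fun ω _ => by
    by_cases h : Y ω = b <;> by_cases h' : X ω = a <;> simp [h, h', hp ω]

end Pmass

section Entropy

variable {Ω α β γ : Type*} [Fintype Ω] [Fintype α] [Fintype β] [Fintype γ]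
  [DecidableEq α] [DecidableEq β] [DecidableEq γ] {p : Ω → ℝ}

-- Every entropy (in)equality below is reduced through this identity to a comparison in each `ω`.
lemma ent_mul_log_two (Y : Ω → α) :
    ent p Y * Real.log 2 = -∑ ω, p ω * Real.log (pmass p Y (Y ω)) := by
  rw [← sum_pmass_mul Y (fun a => Real.log (pmass p Y a)), ent, sum_mul, ← sum_neg_distrib]
  refine sum_congr rfl fun a _ => ?_
  rw [Real.logb, neg_mul, mul_assoc, div_mul_cancel₀ _ (Real.log_pos one_lt_two).ne']

lemma sum_mul_congr {f g : Ω → ℝ} (h : ∀ ω, p ω ≠ 0 → f ω = g ω) :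
    ∑ ω, p ω * f ω = ∑ ω, p ω * g ω :=
  sum_congr rfl fun ω _ => by by_cases hω : p ω = 0 <;> simp [hω, h]

lemma ent_congr {Y : Ω → α} {Z : Ω → β}
    (h : ∀ ω ω', p ω ≠ 0 → p ω' ≠ 0 → (Y ω' = Y ω ↔ Z ω' = Z ω)) :
    ent p Y = ent p Z := by
  have hpmass : ∀ ω, p ω ≠ 0 → pmass p Y (Y ω) = pmass p Z (Z ω) := fun ω hω =>
    sum_congr rfl fun ω' _ => by
      by_cases hω' : p ω' = 0
      · simp [hω']
      · simp only [h ω ω' hω hω']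
  refine mul_right_cancel₀ (Real.log_pos one_lt_two).ne' ?_
  rw [ent_mul_log_two, ent_mul_log_two, sum_mul_congr fun ω hω => congrArg Real.log (hpmass ω hω)]

lemma ent_le_ent_pair (hp : ∀ ω, 0 ≤ p ω) (X : Ω → α) (Y : Ω → β) :
    ent p Y ≤ ent p (fun ω => (X ω, Y ω)) := by
  refine le_of_mul_le_mul_right ?_ (Real.log_pos one_lt_two)
  rw [ent_mul_log_two, ent_mul_log_two, neg_le_neg_iff]
  refine sum_le_sum fun ω _ => ?_
  by_cases hω : p ω = 0
  · simp [hω]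
  exact mul_le_mul_of_nonneg_left (Real.log_le_log (pmass_apply_pos hp _ hω)
    (pmass_pair_le hp X Y _ _)) (hp ω)

lemma ent_pair_eq_of_comp {Y : Ω → α} {X : Ω → β} (g : α → β)
    (hX : ∀ ω, p ω ≠ 0 → X ω = g (Y ω)) :
    ent p (fun ω => (Y ω, X ω)) = ent p Y :=
  ent_congr fun ω ω' hω hω' => by
    simp only [Prod.mk.injEq, hX ω hω, hX ω' hω', and_iff_left_iff_imp]
    exact fun h => congrArg g h

lemma ent_pair_le_of_comp (hp : ∀ ω, 0 ≤ p ω) {Y : Ω → α} {Z : Ω → β} {X : Ω → γ}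
    (g : α → β → γ) (hX : ∀ ω, p ω ≠ 0 → X ω = g (Y ω) (Z ω)) :
    ent p (fun ω => (Y ω, X ω)) ≤ ent p (fun ω => (Z ω, Y ω)) := by
  refine (ent_le_ent_pair hp Z _).trans_eq (ent_congr fun ω ω' hω hω' => ?_)
  simp only [Prod.mk.injEq, hX ω hω, hX ω' hω']
  constructor
  · exact fun h => ⟨h.1, h.2.1⟩
  · rintro ⟨hZ, hY⟩
    exact ⟨hZ, hY, by rw [hY, hZ]⟩

lemma ent_add_ent_le (hp : ∀ ω, 0 ≤ p ω) (A : Ω → α) (B : Ω → β) (C : Ω → γ) :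
    ent p (fun ω => (A ω, B ω, C ω)) + ent p C
      ≤ ent p (fun ω => (A ω, C ω)) + ent p (fun ω => (B ω, C ω)) := by
  set PABC := pmass p (fun ω => (A ω, B ω, C ω))
  set PAC := pmass p (fun ω => (A ω, C ω))
  set PBC := pmass p (fun ω => (B ω, C ω))
  set PC := pmass p C
  have hpos : ∀ ω, p ω ≠ 0 → 0 < PABC (A ω, B ω, C ω) ∧ 0 < PAC (A ω, C ω) ∧
      0 < PBC (B ω, C ω) ∧ 0 < PC (C ω) := fun ω hω =>
    ⟨pmass_apply_pos hp _ hω, pmass_apply_pos hp _ hω, pmass_apply_pos hp _ hω,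
      pmass_apply_pos hp _ hω⟩
  -- Gibbs' inequality comparing the joint law with `P(A | C) P(B | C) P(C)`, whose ratio is `r`
  set r : α × β × γ → ℝ := fun z => PAC (z.1, z.2.2) * PBC z.2 / (PABC z * PC z.2.2)
  have hr_sum : ∑ ω, p ω * r (A ω, B ω, C ω) ≤ ∑ ω, p ω := by
    rw [← sum_pmass_mul (fun ω => (A ω, B ω, C ω)), ← sum_pmass (fun ω => (B ω, C ω)),
      Fintype.sum_prod_type, sum_comm]
    refine sum_le_sum fun bc _ => ?_
    calc ∑ a, PABC (a, bc) * r (a, bc)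
        ≤ ∑ a, PAC (a, bc.2) * PBC bc / PC bc.2 := by
          refine sum_le_sum fun a _ => ?_
          by_cases h : PABC (a, bc) = 0
          · simp only [h, zero_mul]
            exact div_nonneg (mul_nonneg (pmass_nonneg hp _ _) (pmass_nonneg hp _ _))
              (pmass_nonneg hp _ _)
          · rw [mul_div_assoc']
            exact (mul_div_mul_left _ _ h).le
      _ = PC bc.2 * PBC bc / PC bc.2 := by
          rw [← sum_div, ← sum_mul, sum_pmass_pair]
      _ ≤ PBC bc := by
          by_cases h : PC bc.2 = 0
          · simpa [h] using pmass_nonneg hp _ bc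
          · rw [mul_div_cancel_left₀ _ h]
  have hlog : ∀ ω, p ω ≠ 0 → Real.log (r (A ω, B ω, C ω))
      = Real.log (PAC (A ω, C ω)) + Real.log (PBC (B ω, C ω))
        - Real.log (PABC (A ω, B ω, C ω)) - Real.log (PC (C ω)) := fun ω hω => by
    obtain ⟨h1, h2, h3, h4⟩ := hpos ω hω
    rw [Real.log_div (by positivity) (by positivity), Real.log_mul h2.ne' h3.ne',
      Real.log_mul h1.ne' h4.ne']
    ring
  have hgibbs : ∑ ω, p ω * Real.log (r (A ω, B ω, C ω)) ≤ 0 := by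
    calc ∑ ω, p ω * Real.log (r (A ω, B ω, C ω))
        ≤ ∑ ω, p ω * (r (A ω, B ω, C ω) - 1) := by
          refine sum_le_sum fun ω _ => ?_
          by_cases hω : p ω = 0
          · simp [hω]
          obtain ⟨h1, h2, h3, h4⟩ := hpos ω hω
          exact mul_le_mul_of_nonneg_left (Real.log_le_sub_one_of_pos (by positivity)) (hp ω)
      _ ≤ 0 := by simpa [mul_sub] using hr_sum
  rw [sum_mul_congr hlog] at hgibbs
  refine le_of_mul_le_mul_right ?_ (Real.log_pos one_lt_two)
  simp only [add_mul, ent_mul_log_two]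
  simp only [mul_sub, mul_add, sum_sub_distrib, sum_add_distrib] at hgibbs
  linarith

end Entropy

section Independence

variable {Ω ι ρ : Type*} [Fintype Ω] [Fintype ι] [DecidableEq ι] [Fintype ρ] [DecidableEq ρ]
  {p : Ω → ℝ}

lemma ent_pi_of_indep (hp : ∀ ω, 0 ≤ p ω) (R : ι → Ω → ρ)
    (hindep : ∀ x, pmass p (fun ω e => R e ω) x = ∏ e, pmass p (R e) (x e)) :
    ent p (fun ω e => R e ω) = ∑ e, ent p (R e) := by
  refine mul_right_cancel₀ (Real.log_pos one_lt_two).ne' ?_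
  rw [ent_mul_log_two, sum_mul]
  simp_rw [ent_mul_log_two]
  rw [sum_neg_distrib, neg_inj, sum_mul_congr fun ω hω => by
    rw [hindep, Real.log_prod fun e _ => (pmass_apply_pos hp (R e) hω).ne']]
  simp only [mul_sum]
  exact sum_comm

lemma pmass_subtype_of_indep (h1 : ∑ ω, p ω = 1) (R : ι → Ω → ρ)
    (hindep : ∀ x, pmass p (fun ω e => R e ω) x = ∏ e, pmass p (R e) (x e))
    (P : ι → Prop) [DecidablePred P] (y : {e // P e} → ρ) :
    pmass p (fun ω (e : {e // P e}) => R e ω) y = ∏ e : {e // P e}, pmass p (R e) (y e) := by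
  let t : ∀ e, Finset ρ := fun e => if h : P e then {y ⟨e, h⟩} else univ
  have hfactor : ∀ e, ∑ a ∈ t e, pmass p (R e) a
      = if h : P e then pmass p (R e) (y ⟨e, h⟩) else 1 := by
    intro e
    by_cases h : P e <;> simp [t, h, sum_pmass, h1]
  have hfilter : univ.filter (fun z : ι → ρ => (fun e : {e // P e} => z e) = y)
      = Fintype.piFinset t := by
    ext z
    simp only [mem_filter, mem_univ, true_and, Fintype.mem_piFinset, funext_iff, Subtype.forall]
    refine forall_congr' fun e => ?_
    by_cases h : P e <;> simp [t, h]
  rw [pmass_comp (fun ω e => R e ω) (fun z (e : {e // P e}) => z e), ← sum_filter, hfilter]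
  simp_rw [hindep]
  rw [← prod_univ_sum, Finset.prod_congr rfl fun e _ => hfactor e, Fintype.prod_dite]
  simp

end Independence

theorem shearer_of_submodular {ι ν : Type*} [DecidableEq ι] [Fintype ν] (f : Finset ι → ℝ)
    (hf : ∀ T S u, T ⊆ S → f (insert u S) - f S ≤ f (insert u T) - f T)
    (t : ℕ) (U : Finset ι) (F : ν → Finset ι) (hFU : ∀ j, F j ⊆ U)
    (hF : ∀ e ∈ U, #{j | e ∈ F j} = t) :
    t * (f U - f ∅) ≤ ∑ j, (f (F j) - f ∅) := by
  induction U using Finset.induction_on generalizing F with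
  | empty => simp [fun j => subset_empty.mp (hFU j)]
  | insert u U hu ih =>
    have hF' : ∀ e ∈ U, #{j | e ∈ (F j).erase u} = t := fun e he => by
      simpa [ne_of_mem_of_not_mem he hu] using hF e (mem_insert_of_mem he)
    have hFU' : ∀ j, (F j).erase u ⊆ U := fun j =>
      (erase_subset_erase u (hFU j)).trans (erase_insert_subset u U)
    have hstep : ∀ j, (f (F j) - f ∅) - (f ((F j).erase u) - f ∅)
        ≥ if u ∈ F j then f (insert u U) - f U else 0 := fun j => by
      split_ifs with h
      · simpa [insert_erase h] using hf _ U u (hFU' j)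
      · simp [erase_eq_of_notMem h]
    have hcount : ∑ j, (if u ∈ F j then f (insert u U) - f U else 0)
        = t * (f (insert u U) - f U) := by
      rw [sum_ite, sum_const_zero, add_zero, sum_const, nsmul_eq_mul, hF u (mem_insert_self u U)]
    have hU := ih _ hFU' hF'
    have hgain := sum_le_sum fun j (_ : j ∈ univ) => hstep j
    rw [sum_sub_distrib, hcount] at hgain
    linarith

section JointEntropy

variable {Ω ι ρ χ : Type*} [Fintype Ω] [DecidableEq ι] [Fintype ρ] [DecidableEq ρ]
  [Fintype χ] [DecidableEq χ] {p : Ω → ℝ}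

noncomputable def jointEnt (p : Ω → ℝ) (R : ι → Ω → ρ) (X : Ω → χ) (S : Finset ι) : ℝ :=
  ent p (fun ω => ((fun e : S => R e ω), X ω))

lemma jointEnt_insert_sub_le (hp : ∀ ω, 0 ≤ p ω) (R : ι → Ω → ρ) (X : Ω → χ)
    {T S : Finset ι} (hTS : T ⊆ S) (u : ι) :
    jointEnt p R X (insert u S) - jointEnt p R X S
      ≤ jointEnt p R X (insert u T) - jointEnt p R X T := by
  have hST : ∀ ω ω', (∀ e ∈ S, R e ω' = R e ω) → ∀ e ∈ T, R e ω' = R e ω :=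
    fun ω ω' h e he => h e (hTS he)
  have hABC : ent p (fun ω => (R u ω, (fun e : S => R e ω), (fun e : T => R e ω), X ω))
      = jointEnt p R X (insert u S) := ent_congr fun ω ω' _ _ => by
    simp only [Prod.mk.injEq, funext_iff, Subtype.forall, forall_mem_insert]
    have := hST ω ω'
    tauto
  have hAC : ent p (fun ω => (R u ω, (fun e : T => R e ω), X ω))
      = jointEnt p R X (insert u T) := ent_congr fun ω ω' _ _ => by
    simp [funext_iff, and_assoc]
  have hBC : ent p (fun ω => ((fun e : S => R e ω), (fun e : T => R e ω), X ω))
      = jointEnt p R X S := ent_congr fun ω ω' _ _ => by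
    simp only [Prod.mk.injEq, funext_iff, Subtype.forall]
    have := hST ω ω'
    tauto
  have h := ent_add_ent_le hp (R u) (fun ω (e : S) => R e ω) (fun ω => ((fun e : T => R e ω), X ω))
  rw [hABC, hAC, hBC] at h
  unfold jointEnt at h ⊢
  linarith

lemma jointEnt_empty (R : ι → Ω → ρ) (X : Ω → χ) : jointEnt p R X ∅ = ent p X :=
  ent_congr fun ω ω' _ _ => by simp [funext_iff]

lemma jointEnt_univ [Fintype ι] (R : ι → Ω → ρ) (X : Ω → χ) :
    jointEnt p R X univ = ent p (fun ω => ((fun e => R e ω), X ω)) :=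
  ent_congr fun ω ω' _ _ => by simp [funext_iff]

lemma jointEnt_filter [Fintype ι] (R : ι → Ω → ρ) (X : Ω → χ) (P : ι → Prop) [DecidablePred P] :
    jointEnt p R X {e | P e} = ent p (fun ω => ((fun e : {e // P e} => R e ω), X ω)) :=
  ent_congr fun ω ω' _ _ => by simp [funext_iff]

end JointEntropy

lemma sum_sum_subtype_mem_of_card_eq {ι κ : Type*} [Fintype ι] [DecidableEq ι] [Fintype κ]
    (S : κ → Finset ι) (k : ℕ) (hS : ∀ e, #(S e) = k) (g : κ → ℝ) :
    ∑ i, ∑ e : {e // i ∈ S e}, g e = k * ∑ e, g e := by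
  have hsub : ∀ i, ∑ e : {e // i ∈ S e}, g e = ∑ e, if i ∈ S e then g e else 0 := fun i => by
    rw [← sum_filter]
    exact (sum_subtype _ (by simp) g).symm
  rw [sum_congr rfl fun i _ => hsub i, sum_comm, mul_sum]
  refine sum_congr rfl fun e _ => ?_
  rw [sum_ite_mem, univ_inter, sum_const, hS, nsmul_eq_mul]

theorem stmt_18 {Ω ρ μ χ : Type*} [Fintype Ω] [Fintype ρ] [Fintype μ] [Fintype χ]
    [DecidableEq ρ] [DecidableEq μ] [DecidableEq χ]
    (p : Ω → ℝ) (hp : IsProb p) (n k : ℕ) (hk1 : 1 ≤ k) (hkn : k ≤ n - 1)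
    (R : Edge n k → Ω → ρ)
    (hindep : ∀ x : Edge n k → ρ,
      pmass p (fun ω => fun e => R e ω) x = ∏ e, pmass p (R e) (x e))
    (M : Ω → μ)
    (hM : ∃ g : (Edge n k → ρ) → μ, ∀ ω, p ω ≠ 0 → M ω = g (fun e => R e ω))
    (X : Ω → χ)
    (hX : ∀ i : Fin n, ∃ g : ({e : Edge n k // i ∈ e.1} → ρ) → μ → χ,
      ∀ ω, p ω ≠ 0 → X ω = g (fun e => R e.1 ω) (M ω)) :
    ent p X ≤ (1 / ((n : ℝ) - (k : ℝ))) *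
      ∑ i : Fin n, condEnt p M (fun ω => fun e : {e : Edge n k // i ∈ e.1} => R e.1 ω) := by
  obtain ⟨gM, hgM⟩ := hM
  choose g hg using hX
  have hn : 0 < n := by omega
  have hJuniv : jointEnt p R X univ = ∑ e, ent p (R e) := by
    rw [jointEnt_univ, ent_pair_eq_of_comp (fun r => g ⟨0, hn⟩ (fun e => r e.1) (gM r))
      fun ω hω => by rw [hg _ ω hω, hgM ω hω], ent_pi_of_indep hp.1 R hindep]
  have hshearer := shearer_of_submodular (jointEnt p R X)
    (fun _ _ u hTS => jointEnt_insert_sub_le hp.1 R X hTS u) k univ (fun i => {e | i ∈ e.1})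
    (fun _ => subset_univ _) (fun e _ => by simpa [filter_univ_mem] using e.2)
  rw [jointEnt_empty, hJuniv, sum_sub_distrib, sum_const, card_univ, Fintype.card_fin,
    nsmul_eq_mul] at hshearer
  have huser : ∀ i, jointEnt p R X {e | i ∈ e.1} - ∑ e : {e : Edge n k // i ∈ e.1}, ent p (R e)
      ≤ condEnt p M (fun ω => fun e : {e : Edge n k // i ∈ e.1} => R e.1 ω) := fun i => by
    rw [condEnt, jointEnt_filter, ← ent_pi_of_indep hp.1 (fun e : {e : Edge n k // i ∈ e.1} => R e)
      (pmass_subtype_of_indep hp.2 R hindep _)]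
    linarith [ent_pair_le_of_comp hp.1 (g i) (hg i)]
  have hcount : ∑ i, ∑ e : {e : Edge n k // i ∈ e.1}, ent p (R e) = k * ∑ e, ent p (R e) :=
    sum_sum_subtype_mem_of_card_eq (fun e : Edge n k => e.1) k (fun e => e.2) fun e => ent p (R e)
  have hsum := sum_le_sum fun i (_ : i ∈ univ) => huser i
  rw [sum_sub_distrib, hcount] at hsum
  have hkn' : (k : ℝ) < n := by exact_mod_cast (by omega : k < n)
  rw [one_div, inv_mul_eq_div, le_div_iff₀ (sub_pos.2 hkn')]
  linarith
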